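/- arXiv:2505.22652 — 2 statements merged into one kernel-verified Lean document; each statement's English description precedes it below -/
import Mathlib

section
/- If G is a connected graph that admits a NAC-coloring, then so does any graph obtained from G by subdividing an edge (replacing an edge by a path of length 2 through a new vertex). -/
/-- `c` is a NAC-coloring of `G`: an edge 2-coloring (here `true` = red,
`false` = blue) such that both colors occur on edges of `G` and every cycle of `G`
is either monochromatic or contains at least two edges of each color. -/
def IsNACColoring {V : Type*} (G : SimpleGraph V) (c : Sym2 V → Bool) : Prop :=
  (∃ e ∈ G.edgeSet, c e = true) ∧ (∃ e ∈ G.edgeSet, c e = false) ∧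
  ∀ ⦃v : V⦄ (w : G.Walk v v), w.IsCycle →
    (∀ e ∈ w.edges, c e = true) ∨ (∀ e ∈ w.edges, c e = false) ∨
    (2 ≤ (w.edges.filter (fun e => c e = true)).length ∧
     2 ≤ (w.edges.filter (fun e => c e = false)).length)

/-- The graph obtained from `G` by subdividing the edge `{a, b}`: the edge is
removed and replaced by a path of length 2 through a new vertex (`none`). -/
def subdivideEdge {V : Type*} (G : SimpleGraph V) (a b : V) :
    SimpleGraph (Option V) :=
  SimpleGraph.fromRel (fun x y =>
    (∃ u v, x = some u ∧ y = some v ∧ G.Adj u v ∧ s(u, v) ≠ s(a, b)) ∨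
    (x = none ∧ (y = some a ∨ y = some b)))

/-!
Colour both new edges like the subdivided edge `s(a, b)` and every other edge as in `G`.
A cycle of the subdivision that avoids the new vertex is a cycle of `G` with the same colours;
one through the new vertex contracts to a cycle of `G` through `s(a, b)`, with the colour of
`s(a, b)` occurring once more. Neither change can break the NAC condition: a monochromatic
cycle stays monochromatic, and the number of edges of each colour only grows.
-/

open SimpleGraph

def IsNACBalanced (l : List Bool) : Prop :=
  (∀ x ∈ l, x = true) ∨ (∀ x ∈ l, x = false) ∨ (2 ≤ l.count true ∧ 2 ≤ l.count false)

namespace IsNACBalanced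

variable {l l' : List Bool}

lemma of_perm (h : IsNACBalanced l) (hp : l.Perm l') : IsNACBalanced l' := by
  unfold IsNACBalanced at *
  simp only [← hp.mem_iff, ← hp.count_eq]
  exact h

lemma cons_of_mem (h : IsNACBalanced l) {x : Bool} (hx : x ∈ l) : IsNACBalanced (x :: l) := by
  rcases h with h | h | ⟨ht, hf⟩
  · exact Or.inl (List.forall_mem_cons.2 ⟨h x hx, h⟩)
  · exact Or.inr (Or.inl (List.forall_mem_cons.2 ⟨h x hx, h⟩))
  · refine Or.inr (Or.inr ⟨?_, ?_⟩) <;> simp only [List.count_cons] <;> omega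

end IsNACBalanced

lemma isNACColoring_iff {V : Type*} {G : SimpleGraph V} {c : Sym2 V → Bool} :
    IsNACColoring G c ↔ (∃ e ∈ G.edgeSet, c e = true) ∧ (∃ e ∈ G.edgeSet, c e = false) ∧
      ∀ ⦃v : V⦄ (w : G.Walk v v), w.IsCycle → IsNACBalanced (w.edges.map c) := by
  have hcount : ∀ (l : List (Sym2 V)) (s : Bool),
      (l.filter (fun e => c e = s)).length = (l.map c).count s := by
    intro l s
    rw [List.count, ← List.countP_eq_length_filter, List.countP_map]
    exact List.countP_congr fun e _ => by simp
  simp only [IsNACColoring, IsNACBalanced, List.forall_mem_map, hcount]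

lemma IsNACColoring.pullback {V W : Type*} {G : SimpleGraph V} {H : SimpleGraph W}
    {c : Sym2 V → Bool} (hc : IsNACColoring G c) (π : Sym2 W → Sym2 V)
    (hedge : ∀ e ∈ G.edgeSet, ∃ e' ∈ H.edgeSet, π e' = e)
    (hcycle : ∀ ⦃x : W⦄ (w : H.Walk x x), w.IsCycle → ∃ (u : V) (w' : G.Walk u u), w'.IsCycle ∧
      ((w.edges.map π).Perm w'.edges ∨ ∃ e ∈ w'.edges, (w.edges.map π).Perm (e :: w'.edges))) :
    IsNACColoring H (c ∘ π) := by
  obtain ⟨⟨et, het, hct⟩, ⟨ef, hef, hcf⟩, hcyc⟩ := isNACColoring_iff.1 hc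
  obtain ⟨et', het', rfl⟩ := hedge et het
  obtain ⟨ef', hef', rfl⟩ := hedge ef hef
  refine isNACColoring_iff.2 ⟨⟨et', het', hct⟩, ⟨ef', hef', hcf⟩, fun x w hw => ?_⟩
  obtain ⟨u, w', hw', hp | ⟨e, he, hp⟩⟩ := hcycle w hw
  all_goals rw [← List.map_map]
  · exact (hcyc w' hw').of_perm (hp.map c).symm
  · exact ((hcyc w' hw').cons_of_mem (List.mem_map_of_mem he)).of_perm (hp.map c).symm

namespace subdivideEdge

variable {V : Type*} {G : SimpleGraph V} {a b : V}

lemma adj_some_some {u v : V} :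
    (subdivideEdge G a b).Adj (some u) (some v) ↔ G.Adj u v ∧ s(u, v) ≠ s(a, b) := by
  simp only [subdivideEdge, fromRel_adj, ne_eq, Option.some.injEq, reduceCtorEq, false_and,
    or_false, exists_and_left, exists_eq_left']
  constructor
  · rintro ⟨-, h | ⟨h, h'⟩⟩
    · exact h
    · exact ⟨h.symm, by rwa [Sym2.eq_swap]⟩
  · intro h
    exact ⟨fun huv => h.1.ne huv, Or.inl h⟩

lemma adj_none {x : Option V} : (subdivideEdge G a b).Adj none x ↔ x = some a ∨ x = some b := by
  cases x <;> simp [subdivideEdge]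

open Classical in
/-- The map on edges that contracts the two new edges back to `s(a, b)`. -/
noncomputable def proj (a b : V) (e : Sym2 (Option V)) : Sym2 V :=
  if none ∈ e then s(a, b) else e.map (Option.getD · a)

lemma proj_of_none_mem {e : Sym2 (Option V)} (h : none ∈ e) : proj a b e = s(a, b) := by
  simp [proj, h]

lemma proj_map_some (e : Sym2 V) : proj a b (e.map some) = e := by
  induction e using Sym2.ind with
  | _ u v => simp [proj]

lemma exists_mem_edgeSet_proj_eq {e : Sym2 V} (he : e ∈ G.edgeSet) :
    ∃ e' ∈ (subdivideEdge G a b).edgeSet, proj a b e' = e := by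
  by_cases hsub : e = s(a, b)
  · exact ⟨s(none, some a), adj_none.2 (Or.inl rfl), by rw [hsub, proj_of_none_mem (by simp)]⟩
  · induction e using Sym2.ind with
    | _ u v => exact ⟨s(some u, some v), adj_some_some.2 ⟨he, hsub⟩, proj_map_some s(u, v)⟩

variable (G a b) in
def induceHom :
    (subdivideEdge G a b).induce {x | x ≠ none} →g G.deleteEdges {s(a, b)} where
  toFun x := x.1.get (Option.ne_none_iff_isSome.1 x.2)
  map_rel' {x y} := by
    obtain ⟨_ | u, hu⟩ := x
    · exact absurd rfl hu
    obtain ⟨_ | v, hv⟩ := y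
    · exact absurd rfl hv
    simpa [deleteEdges_adj] using adj_some_some.1

lemma induceHom_injective : Function.Injective (induceHom G a b) :=
  fun _ _ h => Subtype.ext (Option.get_inj.1 h)

lemma proj_map_val (e : Sym2 {x : Option V // x ≠ none}) :
    proj a b (e.map Subtype.val) = e.map (induceHom G a b) := by
  induction e using Sym2.ind with
  | _ x y =>
    obtain ⟨_ | u, hu⟩ := x
    · exact absurd rfl hu
    obtain ⟨_ | v, hv⟩ := y
    · exact absurd rfl hv
    simp [proj, induceHom]

section liftWalk

variable {x y : Option V} (w : (subdivideEdge G a b).Walk x y) (hw : ∀ z ∈ w.support, z ≠ none)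

def liftWalk :
    G.Walk (induceHom G a b ⟨x, hw x w.start_mem_support⟩)
      (induceHom G a b ⟨y, hw y w.end_mem_support⟩) :=
  ((w.induce {z | z ≠ none} hw).map (induceHom G a b)).mapLe (G.deleteEdges_le _)

lemma edges_liftWalk : (liftWalk w hw).edges = w.edges.map (proj a b) := by
  have h := Walk.edges_map (Embedding.induce {z | z ≠ none}).toHom (w.induce {z | z ≠ none} hw)
  rw [Walk.map_induce] at h
  rw [liftWalk, Walk.edges_mapLe_eq_edges, Walk.edges_map]
  refine Eq.trans ?_ (congrArg (List.map (proj a b)) h).symm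
  rw [List.map_map]
  exact List.map_congr_left fun e _ => (proj_map_val e).symm

lemma isPath_liftWalk_iff : (liftWalk w hw).IsPath ↔ w.IsPath := by
  have h := Walk.isPath_map_iff_of_injective (p := w.induce {z | z ≠ none} hw)
    (f := (Embedding.induce _).toHom) Subtype.val_injective
  rw [Walk.map_induce] at h
  rw [liftWalk, Walk.isPath_mapLe, Walk.isPath_map_iff_of_injective induceHom_injective]
  exact h.symm

lemma mk_notMem_edges_liftWalk : s(a, b) ∉ (liftWalk w hw).edges := by
  rw [liftWalk, Walk.edges_mapLe_eq_edges]
  intro h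
  simpa [edgeSet_deleteEdges] using Walk.edges_subset_edgeSet _ h

end liftWalk

lemma isCycle_liftWalk_iff {x : Option V} (w : (subdivideEdge G a b).Walk x x)
    (hw : ∀ z ∈ w.support, z ≠ none) : (liftWalk w hw).IsCycle ↔ w.IsCycle := by
  have h := Walk.isCycle_map_iff_of_injective (p := w.induce {z | z ≠ none} hw)
    (f := (Embedding.induce _).toHom) Subtype.val_injective
  rw [Walk.map_induce] at h
  rw [liftWalk, Walk.isCycle_mapLe, Walk.isCycle_map_iff_of_injective induceHom_injective]
  exact h.symm

lemma exists_eq_some_of_adj_none {y z : Option V} (hy : (subdivideEdge G a b).Adj none y)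
    (hz : (subdivideEdge G a b).Adj none z) (hyz : y ≠ z) :
    ∃ y' z', y = some y' ∧ z = some z' ∧ s(y', z') = s(a, b) := by
  rcases adj_none.1 hy with rfl | rfl <;> rcases adj_none.1 hz with rfl | rfl
  · exact absurd rfl hyz
  · exact ⟨a, b, rfl, rfl, rfl⟩
  · exact ⟨b, a, rfl, rfl, Sym2.eq_swap⟩
  · exact absurd rfl hyz

lemma exists_isCycle_of_isCycle_none (hab : G.Adj a b)
    (w : (subdivideEdge G a b).Walk none none) (hw : w.IsCycle) :
    ∃ (u : V) (w' : G.Walk u u), w'.IsCycle ∧ s(a, b) ∈ w'.edges ∧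
      (w.edges.map (proj a b)).Perm (s(a, b) :: w'.edges) := by
  cases w with
  | nil => exact absurd rfl hw.ne_nil
  | @cons _ y _ hy p =>
    obtain ⟨hp, hyp⟩ := (Walk.cons_isCycle_iff p hy).1 hw
    have hp_rev := hp.reverse
    have hp_edges : p.edges = p.reverse.edges.reverse := by simp
    cases hrev : p.reverse with
    | nil => exact absurd rfl hy.ne
    | @cons _ z _ hz q =>
      rw [hrev, Walk.cons_isPath_iff] at hp_rev
      rw [hrev, Walk.edges_cons] at hp_edges
      obtain ⟨hq, hnq⟩ := hp_rev
      have hyz : y ≠ z := by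
        rintro rfl
        exact hyp (by simp [hp_edges])
      obtain ⟨y', z', rfl, rfl, hyz'⟩ := exists_eq_some_of_adj_none hy hz hyz
      have hn : ∀ x ∈ q.support, x ≠ none := fun x hx h => hnq (h ▸ hx)
      let q' : G.Walk z' y' := liftWalk q hn
      have hadj : G.Adj y' z' := by rw [← mem_edgeSet, hyz']; exact hab
      refine ⟨y', .cons hadj q', ?_, by simp [hyz'], ?_⟩
      · rw [Walk.cons_isCycle_iff, hyz']
        exact ⟨(isPath_liftWalk_iff q hn).2 hq, mk_notMem_edges_liftWalk q hn⟩
      · rw [Walk.edges_cons, Walk.edges_cons, List.map_cons, hp_edges, List.map_reverse,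
          List.map_cons, ← edges_liftWalk q hn, proj_of_none_mem (by simp), hyz']
        exact (List.reverse_perm _).cons _

lemma exists_isCycle_of_isCycle (hab : G.Adj a b) {x : Option V}
    (w : (subdivideEdge G a b).Walk x x) (hw : w.IsCycle) :
    ∃ (u : V) (w' : G.Walk u u), w'.IsCycle ∧ ((w.edges.map (proj a b)).Perm w'.edges ∨
      ∃ e ∈ w'.edges, (w.edges.map (proj a b)).Perm (e :: w'.edges)) := by
  classical
  by_cases hn : none ∈ w.support
  · obtain ⟨u, w', hw', hab', hperm⟩ := exists_isCycle_of_isCycle_none hab _ (hw.rotate hn)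
    exact ⟨u, w', hw', Or.inr ⟨_, hab', ((w.rotate_edges none hn).perm.map _).symm.trans hperm⟩⟩
  · have hn : ∀ z ∈ w.support, z ≠ none := fun z hz h => hn (h ▸ hz)
    exact ⟨_, liftWalk w hn, (isCycle_liftWalk_iff w hn).2 hw,
      Or.inl (edges_liftWalk w hn ▸ List.Perm.refl _)⟩

end subdivideEdge

theorem nac_of_subdivision_general {V : Type*} (G : SimpleGraph V) (a b : V)
    (hab : G.Adj a b)
    (hNAC : ∃ c : Sym2 V → Bool, IsNACColoring G c) :
    ∃ c' : Sym2 (Option V) → Bool, IsNACColoring (subdivideEdge G a b) c' := by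
  obtain ⟨c, hc⟩ := hNAC
  exact ⟨c ∘ subdivideEdge.proj a b, hc.pullback _
    (fun _ he => subdivideEdge.exists_mem_edgeSet_proj_eq he)
    (fun _ w hw => subdivideEdge.exists_isCycle_of_isCycle hab w hw)⟩

/-- If a connected graph `G` admits a NAC-coloring, then so does any graph
obtained from `G` by subdividing an edge. -/
theorem nac_of_subdivision {V : Type*} (G : SimpleGraph V) (a b : V)
    (hab : G.Adj a b) (hconn : G.Connected)
    (hNAC : ∃ c : Sym2 V → Bool, IsNACColoring G c) :
    ∃ c' : Sym2 (Option V) → Bool, IsNACColoring (subdivideEdge G a b) c' :=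
  nac_of_subdivision_general G a b hab hNAC
end

section
/- If a connected graph G has a stable separating set, then G admits a NAC-coloring. -/
namespace SimpleGraph

variable {V : Type*} {G : SimpleGraph V}

lemma Reachable.exists_adj_of_ne {u v : V} (h : G.Reachable u v) (hne : u ≠ v) :
    ∃ w, G.Adj u w := by
  obtain ⟨p⟩ := h
  exact ⟨p.snd, p.adj_snd (Walk.not_nil_of_ne hne)⟩

namespace Walk.IsCycle

variable {u v : V} {p : G.Walk u u}

lemma exists_ne_edges_mem (hp : p.IsCycle) (hv : v ∈ p.support) :
    ∃ e₁ ∈ p.edges, ∃ e₂ ∈ p.edges, e₁ ≠ e₂ ∧ v ∈ e₁ ∧ v ∈ e₂ := by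
  obtain ⟨a, b, hab, hnbr⟩ := Set.ncard_eq_two.mp (hp.ncard_neighborSet_toSubgraph_eq_two hv)
  have ha : a ∈ p.toSubgraph.neighborSet v := hnbr ▸ Set.mem_insert a {b}
  have hb : b ∈ p.toSubgraph.neighborSet v := hnbr ▸ Set.mem_insert_of_mem a rfl
  exact ⟨s(v, a), adj_toSubgraph_iff_mem_edges.mp ha, s(v, b),
    adj_toSubgraph_iff_mem_edges.mp hb, fun h => hab (Sym2.congr_right.mp h),
    Sym2.mem_mk_left v a, Sym2.mem_mk_left v b⟩

lemma two_le_length_filter_edges (hp : p.IsCycle) (hv : v ∈ p.support) {f : Sym2 V → Bool}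
    (hf : ∀ e ∈ p.edges, v ∈ e → f e) : 2 ≤ (p.edges.filter f).length := by
  classical
  obtain ⟨e₁, h₁, e₂, h₂, hne, hv₁, hv₂⟩ := hp.exists_ne_edges_mem hv
  rw [← List.toFinset_card_of_nodup (hp.edges_nodup.filter f)]
  exact Finset.one_lt_card.mpr
    ⟨e₁, by simp [h₁, hf e₁ h₁ hv₁], e₂, by simp [h₂, hf e₂ h₂ hv₂], hne⟩

lemma two_le_length_filter_color (hp : p.IsCycle) {c : Sym2 V → Bool}
    (hmono : ∀ e ∈ G.edgeSet, ∃ v ∈ e, ∀ e' ∈ G.edgeSet, v ∈ e' → c e' = c e)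
    {e : Sym2 V} (he : e ∈ p.edges) : 2 ≤ (p.edges.filter (fun e' => c e' = c e)).length := by
  obtain ⟨v, hve, hv⟩ := hmono e (p.edges_subset_edgeSet he)
  exact hp.two_le_length_filter_edges (p.mem_support_of_mem_edges he hve)
    fun e' he' hve' => decide_eq_true (hv e' (p.edges_subset_edgeSet he') hve')

end Walk.IsCycle

end SimpleGraph

open SimpleGraph

section

variable {V : Type*} {G : SimpleGraph V}

theorem isNACColoring_of_forall_exists_mem_monochromatic {c : Sym2 V → Bool}
    (hred : ∃ e ∈ G.edgeSet, c e = true) (hblue : ∃ e ∈ G.edgeSet, c e = false)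
    (hmono : ∀ e ∈ G.edgeSet, ∃ v ∈ e, ∀ e' ∈ G.edgeSet, v ∈ e' → c e' = c e) :
    IsNACColoring G c := by
  refine ⟨hred, hblue, fun _ p hp => ?_⟩
  by_cases hallRed : ∀ e ∈ p.edges, c e = true
  · exact Or.inl hallRed
  by_cases hallBlue : ∀ e ∈ p.edges, c e = false
  · exact Or.inr (Or.inl hallBlue)
  obtain ⟨eb, heb, hcb⟩ := not_forall₂.mp hallRed
  obtain ⟨er, her, hcr⟩ := not_forall₂.mp hallBlue
  rw [Bool.not_eq_true] at hcb
  rw [Bool.not_eq_false] at hcr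
  refine Or.inr (Or.inr ⟨?_, ?_⟩)
  · simpa only [hcr] using hp.two_le_length_filter_color hmono her
  · simpa only [hcb] using hp.two_le_length_filter_color hmono heb

variable {S A : Set V}

open Classical in
noncomputable def incidenceColoring (A : Set V) (e : Sym2 V) : Bool :=
  decide (∃ v ∈ e, v ∈ A)

lemma incidenceColoring_eq_true_iff {e : Sym2 V} :
    incidenceColoring A e = true ↔ ∃ v ∈ e, v ∈ A := by
  simp [incidenceColoring]

lemma incidenceColoring_eq_false_of_mem
    (hclosed : ∀ u v, u ∈ A → G.Adj u v → v ∉ S → v ∈ A) {v : V} (hvA : v ∉ A) (hvS : v ∉ S)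
    {e : Sym2 V} (he : e ∈ G.edgeSet) (hve : v ∈ e) : incidenceColoring A e = false := by
  obtain ⟨w, rfl⟩ := Sym2.mem_iff_exists.mp hve
  rw [← Bool.not_eq_true, incidenceColoring_eq_true_iff]
  rintro ⟨u, hu, huA⟩
  rcases Sym2.mem_iff.mp hu with rfl | rfl
  · exact hvA huA
  · exact hvA (hclosed u v huA (G.adj_symm he) hvS)

lemma forall_exists_mem_monochromatic_incidenceColoring
    (hstable : ∀ u ∈ S, ∀ v ∈ S, ¬ G.Adj u v)
    (hclosed : ∀ u v, u ∈ A → G.Adj u v → v ∉ S → v ∈ A) :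
    ∀ e ∈ G.edgeSet, ∃ v ∈ e, ∀ e' ∈ G.edgeSet, v ∈ e' →
      incidenceColoring A e' = incidenceColoring A e := by
  intro e he
  cases hc : incidenceColoring A e with
  | true =>
    obtain ⟨v, hve, hvA⟩ := incidenceColoring_eq_true_iff.mp hc
    exact ⟨v, hve, fun e' _ hve' => incidenceColoring_eq_true_iff.mpr ⟨v, hve', hvA⟩⟩
  | false =>
    have hnotA : ∀ v ∈ e, v ∉ A := fun v hve hvA =>
      Bool.false_ne_true (hc ▸ incidenceColoring_eq_true_iff.mpr ⟨v, hve, hvA⟩)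
    obtain ⟨⟨a, b⟩, rfl⟩ := e.exists_rep
    obtain ⟨v, hve, hvS⟩ : ∃ v ∈ s(a, b), v ∉ S := by
      by_cases haS : a ∈ S
      · exact ⟨b, Sym2.mem_mk_right a b, fun hbS => hstable a haS b hbS he⟩
      · exact ⟨a, Sym2.mem_mk_left a b, haS⟩
    exact ⟨v, hve, fun e' he' hve' =>
      incidenceColoring_eq_false_of_mem hclosed (hnotA v hve) hvS he' hve'⟩

theorem isNACColoring_incidenceColoring (hconn : G.Connected)
    (hstable : ∀ u ∈ S, ∀ v ∈ S, ¬ G.Adj u v)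
    (hclosed : ∀ u v, u ∈ A → G.Adj u v → v ∉ S → v ∈ A)
    {x y : V} (hx : x ∈ A) (hyA : y ∉ A) (hyS : y ∉ S) :
    IsNACColoring G (incidenceColoring A) := by
  have hxy : x ≠ y := fun h => hyA (h ▸ hx)
  obtain ⟨x', hxx'⟩ := (hconn.preconnected x y).exists_adj_of_ne hxy
  obtain ⟨y', hyy'⟩ := (hconn.preconnected y x).exists_adj_of_ne hxy.symm
  exact isNACColoring_of_forall_exists_mem_monochromatic
    ⟨s(x, x'), hxx', incidenceColoring_eq_true_iff.mpr ⟨x, Sym2.mem_mk_left x x', hx⟩⟩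
    ⟨s(y, y'), hyy',
      incidenceColoring_eq_false_of_mem hclosed hyA hyS hyy' (Sym2.mem_mk_left y y')⟩
    (forall_exists_mem_monochromatic_incidenceColoring hstable hclosed)

end

/-- If a connected graph has a stable separating set (an independent set of
vertices whose removal disconnects the graph), then it admits a NAC-coloring. -/
theorem nac_of_stable_separating_set {V : Type*} (G : SimpleGraph V)
    (hconn : G.Connected) (S : Set V)
    (hstable : ∀ u ∈ S, ∀ v ∈ S, ¬ G.Adj u v)
    (hsep : ∃ x y : (Sᶜ : Set V), ¬ (G.induce (Sᶜ : Set V)).Reachable x y) :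
    ∃ c : Sym2 V → Bool, IsNACColoring G c := by
  obtain ⟨x, y, hxy⟩ := hsep
  let A : Set V := {v | ∃ h : v ∈ Sᶜ, (G.induce Sᶜ).Reachable x ⟨v, h⟩}
  have hclosed : ∀ u v, u ∈ A → G.Adj u v → v ∉ S → v ∈ A :=
    fun u v ⟨hu, hxu⟩ huv hv => ⟨hv, hxu.trans (Adj.reachable (G := G.induce Sᶜ)
      (u := ⟨u, hu⟩) (v := ⟨v, hv⟩) huv)⟩
  exact ⟨_, isNACColoring_incidenceColoring hconn hstable hclosed
    (x := x) ⟨x.2, .rfl⟩ (fun ⟨_, hxy'⟩ => hxy hxy') y.2⟩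
end
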